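/- arXiv:1908.05800 — 2 statements merged into one kernel-verified Lean document; each statement's English description precedes it below -/
import Mathlib

section
/- (Theorem 4.5, equivalence of OSM and DSM) Let k > 0, let p ∈ ℝ³ with p ≠ 0, let Ω ⊂ ℝ³ be a bounded measurable set of positive Lebesgue measure, and let T be a bounded linear operator on L²(Ω,ℂ³) such that |⟨Th,h⟩| ≥ c‖h‖² for some c > 0 and all h in the L²-closure of H(L²_t(S²)). Then there exist positive constants c₁ and c₂ such that for every y ∈ ℝ³: c₁ · I_OSM(y) ≤ I_DSM(y) ≤ c₂ · √(I_OSM(y)). -/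
open MeasureTheory Metric Complex

noncomputable section

abbrev R3 : Type := EuclideanSpace ℝ (Fin 3)
abbrev C3 : Type := EuclideanSpace ℂ (Fin 3)
abbrev S2 : Type := Metric.sphere (0 : R3) 1

/-- The surface measure on the unit sphere `S²` (total mass `4π`). -/
def σS : Measure S2 := (volume : Measure R3).toSphere

/-- Componentwise complexification of a real vector. -/
def cm (x : R3) : C3 := WithLp.toLp 2 (fun i => (x i : ℂ))

/-- Real dot product on `ℝ³`. -/
def dotR (a b : R3) : ℝ := ∑ i, a i * b i

/-- Bilinear (unconjugated) dot product on `ℂ³`. -/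
def dotc (a b : C3) : ℂ := ∑ i, a i * b i

/-- Cross product on `ℂ³`, extended bilinearly. -/
def crossc (a b : C3) : C3 := WithLp.toLp 2 (crossProduct a b)

/-- Hermitian pairing `a · conj b`. -/
def hdot (a b : C3) : ℂ := ∑ i, a i * (starRingEnd ℂ) (b i)

/-- The test function `φ_y(d) = (d×p)×d e^{−ik d·y}`. -/
def phiy (k : ℝ) (p y : R3) (d : S2) : C3 :=
  Complex.exp (-(Complex.I * k * (dotR (d : R3) y))) •
    crossc (crossc (cm (d : R3)) (cm p)) (cm (d : R3))

/-- The Herglotz wave function `(Hg)(x) = ∫_{S²} g(d) e^{ik x·d} dσ(d)`. -/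
def herg (k : ℝ) (g : S2 → C3) (x : R3) : C3 :=
  ∫ d : S2, Complex.exp (Complex.I * k * (dotR x (d : R3))) • g d ∂σS

open Classical in
/-- The `L²` class of a function (`0` if the function is not square integrable). -/
def toL2 {α : Type} [MeasurableSpace α] (μ : Measure α) (f : α → C3) : Lp C3 2 μ :=
  if h : MemLp f 2 μ then h.toLp f else 0

/-- `(H^*f)(d) = d × (∫_Ω f(x) e^{−ik x·d} dx) × d`. -/
def hergSt (k : ℝ) (Ω : Set R3) (f : R3 → C3) (d : S2) : C3 :=
  crossc (crossc (cm (d : R3))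
    (∫ x in Ω, Complex.exp (-(Complex.I * k * (dotR x (d : R3)))) • f x)) (cm (d : R3))

/-- The operator `F` built from the factorization `F = H^* T H`:
`(Fg)(d) = d × (∫_Ω (T(Hg))(x) e^{−ik x·d} dx) × d`. -/
def Fop (k : ℝ) (Ω : Set R3)
    (T : Lp C3 2 (volume.restrict Ω) →L[ℂ] Lp C3 2 (volume.restrict Ω))
    (g : S2 → C3) (d : S2) : C3 :=
  crossc (crossc (cm (d : R3))
    (∫ x in Ω, Complex.exp (-(Complex.I * k * (dotR x (d : R3)))) •
      (T (toL2 (volume.restrict Ω) (herg k g))) x)) (cm (d : R3))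

/-- The OSM imaging functional `I_OSM(y) = ∫_{S²} |p·(Fφ_y)(x̂)|² dσ(x̂)`. -/
def IOSM (k : ℝ) (Ω : Set R3)
    (T : Lp C3 2 (volume.restrict Ω) →L[ℂ] Lp C3 2 (volume.restrict Ω))
    (p y : R3) : ℝ :=
  ∫ xh : S2, ‖dotc (cm p) (Fop k Ω T (phiy k p y) xh)‖ ^ 2 ∂σS

/-- The DSM imaging functional `I_DSM(y) = |⟨Fφ_y, φ_y⟩_{L²(S²)}|`. -/
def IDSM (k : ℝ) (Ω : Set R3)
    (T : Lp C3 2 (volume.restrict Ω) →L[ℂ] Lp C3 2 (volume.restrict Ω))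
    (p y : R3) : ℝ :=
  ‖∫ d : S2, hdot (Fop k Ω T (phiy k p y) d) (phiy k p y d) ∂σS‖

/-- The set `H(L²_t(S²)) ⊂ L²(Ω,ℂ³)`: images under the Herglotz operator of square
integrable tangential fields. -/
def ranHt (k : ℝ) (Ω : Set R3) : Set (Lp C3 2 (volume.restrict Ω)) :=
  {h | ∃ g : S2 → C3, MemLp g 2 σS ∧ (∀ᵐ (d : S2) ∂σS, dotc (cm d.val) (g d) = 0) ∧
    h = toL2 (volume.restrict Ω) (herg k g)}

/-!
Write `h_y = H φ_y`. Since `F = H^* T H` and `φ_y` is tangential, Fubini gives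
`⟨F φ_y, φ_y⟩ = ⟨h_y, T h_y⟩`, so coercivity yields `I_DSM(y) ≥ c ‖h_y‖²`. Moving the cross
products onto `p` gives `p · (H^* f)(d) = ((d × p) × d) · ∫_Ω f(x) e^{-ik x·d} dx`, which is bounded
by a constant times `‖f‖_{L²(Ω)}`; with `f = T h_y` this gives `I_OSM(y) ≤ C ‖h_y‖²`.
Conversely `φ_y(d)` is a unimodular multiple of the real vector `(d × p) × d`, so the integrand
of `I_DSM` has the same modulus as `p · (F φ_y)(d)`, and Cauchy–Schwarz on `S²` gives
`I_DSM(y) ≤ √(4π) √(I_OSM(y))`.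
-/

lemma norm_cm (x : R3) : ‖cm x‖ = ‖x‖ := by
  simp [cm, EuclideanSpace.norm_eq]

lemma inner_cm_eq_dotc (a : R3) (b : C3) : inner ℂ (cm a) b = dotc (cm a) b := by
  simp [dotc, cm, PiLp.inner_apply, mul_comm]

lemma hdot_eq_inner (a b : C3) : hdot a b = inner ℂ b a := by
  simp only [hdot, PiLp.inner_apply, RCLike.inner_apply]

lemma norm_dotc_le (a b : C3) : ‖dotc a b‖ ≤ ‖a‖ * ‖b‖ :=
  calc ‖dotc a b‖ ≤ ∑ i, ‖a i‖ * ‖b i‖ := by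
        simpa only [dotc, norm_mul] using norm_sum_le Finset.univ fun i => a i * b i
    _ ≤ √(∑ i, ‖a i‖ ^ 2) * √(∑ i, ‖b i‖ ^ 2) := Real.sum_mul_le_sqrt_mul_sqrt _ _ _
    _ = ‖a‖ * ‖b‖ := by rw [EuclideanSpace.norm_eq, EuclideanSpace.norm_eq]

lemma crossc_cm (a b : R3) : crossc (cm a) (cm b) = cm (WithLp.toLp 2 (crossProduct a b)) := by
  ext i
  fin_cases i <;> simp [cm, crossc, crossProduct]

lemma crossc_crossc_eq (u v : C3) : crossc (crossc u v) u = dotc u u • v - dotc u v • u := by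
  ext i
  fin_cases i <;> simp [dotc, crossc, crossProduct, Fin.sum_univ_three] <;> ring

lemma dotc_crossc_crossc (a u b : C3) :
    dotc a (crossc (crossc u b) u) = dotc (crossc (crossc u a) u) b := by
  simp [dotc, crossc, crossProduct, Fin.sum_univ_three]
  ring

lemma dotc_self_crossc_crossc (u b : C3) : dotc u (crossc (crossc u b) u) = 0 := by
  simp [dotc, crossc, crossProduct, Fin.sum_univ_three]
  ring

lemma dotc_cm_self {d : R3} (hd : ‖d‖ = 1) : dotc (cm d) (cm d) = 1 := by
  rw [← inner_cm_eq_dotc, inner_self_eq_norm_sq_to_K, norm_cm, hd]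
  simp

lemma hdot_crossc_crossc_of_dotc_eq_zero {d : R3} (hd : ‖d‖ = 1) (v : C3) {b : C3}
    (hb : dotc (cm d) b = 0) : hdot (crossc (crossc (cm d) v) (cm d)) b = hdot v b := by
  rw [crossc_crossc_eq, dotc_cm_self hd, hdot_eq_inner, hdot_eq_inner, inner_sub_right,
    inner_smul_right, inner_smul_right, ← inner_conj_symm b (cm d), inner_cm_eq_dotc, hb]
  simp

@[fun_prop]
lemma continuous_cm : Continuous cm := by
  unfold cm; fun_prop

@[fun_prop]
lemma Continuous.dotR {X : Type*} [TopologicalSpace X] {f g : X → R3} (hf : Continuous f)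
    (hg : Continuous g) : Continuous fun x => dotR (f x) (g x) := by
  unfold _root_.dotR; fun_prop

@[fun_prop]
lemma Continuous.dotc {X : Type*} [TopologicalSpace X] {f g : X → C3} (hf : Continuous f)
    (hg : Continuous g) : Continuous fun x => dotc (f x) (g x) := by
  unfold _root_.dotc; fun_prop

@[fun_prop]
lemma Continuous.crossc {X : Type*} [TopologicalSpace X] {f g : X → C3} (hf : Continuous f)
    (hg : Continuous g) : Continuous fun x => crossc (f x) (g x) := by
  unfold _root_.crossc
  refine (PiLp.continuous_toLp 2 _).comp (continuous_pi fun i => ?_)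
  fin_cases i <;> simp [crossProduct] <;> fun_prop

lemma norm_exp_I_mul_mul (a b : ℝ) : ‖exp (I * a * b)‖ = 1 := by
  simp [Complex.norm_exp]

lemma norm_exp_neg_I_mul_mul (a b : ℝ) : ‖exp (-(I * a * b))‖ = 1 := by
  simp [Complex.norm_exp]

lemma conj_exp_I_mul_mul (a b : ℝ) : (starRingEnd ℂ) (exp (I * a * b)) = exp (-(I * a * b)) := by
  rw [← Complex.exp_conj]; simp

lemma integral_norm_le_sqrt_mul_sqrt {α E : Type*} [MeasurableSpace α] [NormedAddCommGroup E]
    {μ : Measure α} [IsFiniteMeasure μ] {f : α → E} (hf : MemLp f 2 μ) :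
    ∫ a, ‖f a‖ ∂μ ≤ √(μ.real Set.univ) * √(∫ a, ‖f a‖ ^ 2 ∂μ) := by
  have h := integral_mul_le_Lp_mul_Lq_of_nonneg (μ := μ) Real.HolderConjugate.two_two
    (ae_of_all _ fun a => norm_nonneg (f a)) (ae_of_all _ fun _ => zero_le_one)
    (by simpa using hf.norm) (memLp_const 1)
  simp only [mul_one, integral_const, smul_eq_mul, Real.rpow_two] at h
  rw [Real.sqrt_eq_rpow, Real.sqrt_eq_rpow, mul_comm]
  simpa using h

lemma MeasureTheory.Lp.norm_eq_sqrt_integral_norm_sq {α E : Type*} [MeasurableSpace α]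
    [NormedAddCommGroup E] {μ : Measure α} (f : Lp E 2 μ) :
    ‖f‖ = √(∫ a, ‖f a‖ ^ 2 ∂μ) := by
  rw [Lp.norm_def, (Lp.memLp f).eLpNorm_eq_integral_rpow_norm two_ne_zero ENNReal.ofNat_ne_top,
    ENNReal.toReal_ofReal (by positivity), Real.sqrt_eq_rpow]
  norm_num

lemma MeasureTheory.Integrable.smul_of_norm_eq_one {α : Type*} [MeasurableSpace α]
    {μ : Measure α} {f : α → C3} {c : α → ℂ} (hf : Integrable f μ)
    (hc : AEStronglyMeasurable c μ) (hc1 : ∀ a, ‖c a‖ = 1) :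
    Integrable (fun a => c a • f a) μ :=
  hf.congr' (hc.smul hf.aestronglyMeasurable) (ae_of_all _ fun a => by simp [norm_smul, hc1])

lemma coeFn_toL2 {α : Type} [MeasurableSpace α] {μ : Measure α} {f : α → C3}
    (hf : MemLp f 2 μ) : toL2 μ f =ᵐ[μ] f := by
  rw [toL2, dif_pos hf]
  exact hf.coeFn_toLp

instance : IsFiniteMeasure σS := by
  unfold σS; infer_instance

lemma norm_S2 (d : S2) : ‖(d : R3)‖ = 1 := by
  simp

section Herglotz

variable (k : ℝ) (Ω : Set R3) {g : S2 → C3}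

lemma norm_herg_le (g : S2 → C3) (x : R3) : ‖herg k g x‖ ≤ ∫ d, ‖g d‖ ∂σS :=
  (norm_integral_le_integral_norm _).trans_eq <| by
    simp only [norm_smul, norm_exp_I_mul_mul, one_mul]

lemma continuous_herg (hg : Integrable g σS) : Continuous (herg k g) := by
  refine continuous_of_dominated (fun x => ?_) (fun x => ae_of_all _ fun d => ?_) hg.norm
    (ae_of_all _ fun d => ?_)
  · exact ((Continuous.cexp (by fun_prop)).aestronglyMeasurable).smul hg.aestronglyMeasurable
  · simp only [norm_smul, norm_exp_I_mul_mul, one_mul, le_refl]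
  · exact (Continuous.cexp (by fun_prop)).smul continuous_const

lemma memLp_herg [IsFiniteMeasure (volume.restrict Ω)] (hg : Integrable g σS) :
    MemLp (herg k g) 2 (volume.restrict Ω) :=
  .of_bound (continuous_herg k hg).aestronglyMeasurable _ (ae_of_all _ (norm_herg_le k g))

lemma continuous_hergSt {f : R3 → C3} (hf : Integrable f (volume.restrict Ω)) :
    Continuous (hergSt k Ω f) := by
  have hint : Continuous fun d : S2 =>
      ∫ x in Ω, exp (-(I * k * (dotR x (d : R3)))) • f x := by
    refine continuous_of_dominated (fun d => ?_) (fun d => ae_of_all _ fun x => ?_) hf.norm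
      (ae_of_all _ fun x => ?_)
    · exact ((Continuous.cexp (by fun_prop)).aestronglyMeasurable).smul hf.aestronglyMeasurable
    · simp only [norm_smul, norm_exp_neg_I_mul_mul, one_mul, le_refl]
    · exact (Continuous.cexp (by fun_prop)).smul continuous_const
  unfold hergSt
  fun_prop

lemma integral_hdot_hergSt {f : R3 → C3} (hf : Integrable f (volume.restrict Ω))
    (hg : Integrable g σS) (htan : ∀ᵐ d ∂σS, dotc (cm d.val) (g d) = 0) :
    (∫ d, hdot (hergSt k Ω f d) (g d) ∂σS) = ∫ x in Ω, hdot (f x) (herg k g x) := by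
  set F : S2 → R3 → ℂ := fun d x => exp (-(I * k * dotR x d)) * inner ℂ (g d) (f x)
  have hinner : ∀ᵐ d ∂σS, hdot (hergSt k Ω f d) (g d) = ∫ x in Ω, F d x := by
    filter_upwards [htan] with d hd
    rw [hergSt, hdot_crossc_crossc_of_dotc_eq_zero (norm_S2 d) _ hd, hdot_eq_inner,
      ← integral_inner (hf.smul_of_norm_eq_one (Continuous.cexp (by fun_prop)).aestronglyMeasurable
        fun x => norm_exp_neg_I_mul_mul _ _)]
    simp_rw [inner_smul_right]
    rfl
  have hF : Integrable (Function.uncurry F) (σS.prod (volume.restrict Ω)) := by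
    refine (hg.norm.mul_prod hf.norm).mono' ?_ (ae_of_all _ fun z => ?_)
    · exact (Continuous.cexp (by fun_prop)).aestronglyMeasurable.mul
        (hg.aestronglyMeasurable.comp_fst.inner hf.aestronglyMeasurable.comp_snd)
    · obtain ⟨d, x⟩ := z
      simpa [F, norm_exp_neg_I_mul_mul] using norm_inner_le_norm (𝕜 := ℂ) (g d) (f x)
  have hherg : ∀ x, ∫ d, F d x ∂σS = hdot (f x) (herg k g x) := by
    intro x
    rw [hdot_eq_inner, ← inner_conj_symm, herg,
      ← integral_inner (hg.smul_of_norm_eq_one (Continuous.cexp (by fun_prop)).aestronglyMeasurable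
        fun d => norm_exp_I_mul_mul _ _),
      ← integral_conj]
    congr 1 with d
    rw [inner_smul_right, map_mul, inner_conj_symm, conj_exp_I_mul_mul]
  rw [integral_congr_ae hinner, integral_integral_swap hF]
  exact integral_congr_ae (ae_of_all _ hherg)

end Herglotz

section Factorization

variable (k : ℝ) (Ω : Set R3)
  (T : Lp C3 2 (volume.restrict Ω) →L[ℂ] Lp C3 2 (volume.restrict Ω))

lemma Fop_eq_hergSt (g : S2 → C3) :
    Fop k Ω T g = hergSt k Ω (T (toL2 (volume.restrict Ω) (herg k g))) :=
  rfl

lemma integral_hdot_Fop [IsFiniteMeasure (volume.restrict Ω)] {g : S2 → C3}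
    (hg : Integrable g σS) (htan : ∀ᵐ d ∂σS, dotc (cm d.val) (g d) = 0) :
    ∫ d, hdot (Fop k Ω T g d) (g d) ∂σS =
      inner ℂ (toL2 (volume.restrict Ω) (herg k g)) (T (toL2 (volume.restrict Ω) (herg k g))) := by
  set h := toL2 (volume.restrict Ω) (herg k g)
  calc ∫ d, hdot (Fop k Ω T g d) (g d) ∂σS = ∫ x in Ω, hdot (T h x) (herg k g x) :=
        integral_hdot_hergSt k Ω ((Lp.memLp _).integrable one_le_two) hg htan
    _ = inner ℂ h (T h) := by
        rw [L2.inner_def]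
        refine integral_congr_ae ?_
        filter_upwards [coeFn_toL2 (memLp_herg k Ω hg)] with x hx
        rw [hdot_eq_inner, hx]

end Factorization

section TestField

variable (k : ℝ) (p y : R3)

lemma dotc_cm_phiy (d : S2) : dotc (cm d.val) (phiy k p y d) = 0 := by
  rw [phiy, ← inner_cm_eq_dotc, inner_smul_right, inner_cm_eq_dotc, dotc_self_crossc_crossc,
    mul_zero]

lemma continuous_phiy : Continuous (phiy k p y) := by
  unfold phiy; fun_prop

lemma memLp_phiy : MemLp (phiy k p y) 2 σS :=
  (continuous_phiy k p y).memLp_of_hasCompactSupport (.of_compactSpace _)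

lemma norm_hdot_hergSt_phiy (Ω : Set R3) (f : R3 → C3) (d : S2) :
    ‖hdot (hergSt k Ω f d) (phiy k p y d)‖ = ‖dotc (cm p) (hergSt k Ω f d)‖ := by
  rw [hergSt, hdot_crossc_crossc_of_dotc_eq_zero (norm_S2 d) _ (dotc_cm_phiy k p y d),
    dotc_crossc_crossc, phiy, crossc_cm, crossc_cm, hdot_eq_inner, inner_smul_left,
    inner_cm_eq_dotc, norm_mul]
  simp [norm_exp_neg_I_mul_mul]

lemma norm_dotc_hergSt_le (Ω : Set R3) {C : ℝ}
    (hC : ∀ d : S2, ‖crossc (crossc (cm d.val) (cm p)) (cm d.val)‖ ≤ C) (f : R3 → C3) (d : S2) :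
    ‖dotc (cm p) (hergSt k Ω f d)‖ ≤ C * ∫ x in Ω, ‖f x‖ := by
  rw [hergSt, dotc_crossc_crossc]
  refine (norm_dotc_le _ _).trans (mul_le_mul (hC d) ((norm_integral_le_integral_norm _).trans_eq ?_)
    (norm_nonneg _) ((norm_nonneg _).trans (hC d)))
  simp only [norm_smul, norm_exp_neg_I_mul_mul, one_mul]

end TestField

section Functionals

variable (k : ℝ) (Ω : Set R3) [IsFiniteMeasure (volume.restrict Ω)]
  (T : Lp C3 2 (volume.restrict Ω) →L[ℂ] Lp C3 2 (volume.restrict Ω)) (p y : R3)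

lemma IDSM_eq_norm_inner :
    IDSM k Ω T p y = ‖inner ℂ (toL2 (volume.restrict Ω) (herg k (phiy k p y)))
      (T (toL2 (volume.restrict Ω) (herg k (phiy k p y))))‖ :=
  congrArg norm <| integral_hdot_Fop k Ω T ((memLp_phiy k p y).integrable one_le_two)
    (ae_of_all _ (dotc_cm_phiy k p y))

lemma IDSM_le_sqrt_IOSM : IDSM k Ω T p y ≤ √(σS.real Set.univ) * √(IOSM k Ω T p y) := by
  have hG : Continuous fun d => dotc (cm p) (Fop k Ω T (phiy k p y) d) := by
    have := continuous_hergSt k Ω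
      ((Lp.memLp (T (toL2 (volume.restrict Ω) (herg k (phiy k p y))))).integrable one_le_two)
    rw [Fop_eq_hergSt]
    fun_prop
  calc IDSM k Ω T p y ≤ ∫ d, ‖hdot (Fop k Ω T (phiy k p y) d) (phiy k p y d)‖ ∂σS :=
        norm_integral_le_integral_norm _
    _ = ∫ d, ‖dotc (cm p) (Fop k Ω T (phiy k p y) d)‖ ∂σS := by
        simp_rw [Fop_eq_hergSt, norm_hdot_hergSt_phiy]
    _ ≤ √(σS.real Set.univ) * √(IOSM k Ω T p y) :=
        integral_norm_le_sqrt_mul_sqrt (hG.memLp_of_hasCompactSupport (.of_compactSpace _))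

lemma IOSM_le {C : ℝ} (hC : ∀ d : S2, ‖crossc (crossc (cm d.val) (cm p)) (cm d.val)‖ ≤ C) :
    IOSM k Ω T p y ≤ σS.real Set.univ * (C * √((volume.restrict Ω).real Set.univ) * ‖T‖ *
      ‖toL2 (volume.restrict Ω) (herg k (phiy k p y))‖) ^ 2 := by
  set h := toL2 (volume.restrict Ω) (herg k (phiy k p y))
  have hC0 : 0 ≤ C := (norm_nonneg _).trans (hC ⟨EuclideanSpace.single 0 1, by simp⟩)
  have hG : ∀ d, ‖dotc (cm p) (Fop k Ω T (phiy k p y) d)‖ ≤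
      C * √((volume.restrict Ω).real Set.univ) * ‖T‖ * ‖h‖ := fun d =>
    calc ‖dotc (cm p) (Fop k Ω T (phiy k p y) d)‖ ≤ C * ∫ x in Ω, ‖T h x‖ :=
          norm_dotc_hergSt_le k p Ω hC _ d
      _ ≤ C * (√((volume.restrict Ω).real Set.univ) * ‖T h‖) := by
          gcongr
          rw [Lp.norm_eq_sqrt_integral_norm_sq]
          exact integral_norm_le_sqrt_mul_sqrt (Lp.memLp _)
      _ ≤ C * √((volume.restrict Ω).real Set.univ) * ‖T‖ * ‖h‖ := by
          rw [mul_assoc C, mul_assoc, mul_assoc]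
          gcongr
          exact T.le_opNorm h
  calc IOSM k Ω T p y ≤ ‖IOSM k Ω T p y‖ := Real.le_norm_self _
    _ ≤ _ := by
        rw [mul_comm]
        refine norm_integral_le_of_norm_le_const (ae_of_all _ fun d => ?_)
        rw [norm_pow, norm_norm]
        exact pow_le_pow_left₀ (norm_nonneg _) (hG d) 2

end Functionals

theorem stmt3_general (k : ℝ) (p : R3) (Ω : Set R3)
    (hΩbdd : Bornology.IsBounded Ω)
    (T : Lp C3 2 (volume.restrict Ω) →L[ℂ] Lp C3 2 (volume.restrict Ω))
    (c : ℝ) (hc : 0 < c)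
    (hcoer : ∀ h ∈ closure (ranHt k Ω), c * ‖h‖ ^ 2 ≤ ‖(inner ℂ (T h) h : ℂ)‖) :
    ∃ c₁ c₂ : ℝ, 0 < c₁ ∧ 0 < c₂ ∧ ∀ y : R3,
      c₁ * IOSM k Ω T p y ≤ IDSM k Ω T p y ∧
      IDSM k Ω T p y ≤ c₂ * Real.sqrt (IOSM k Ω T p y) := by
  have : IsFiniteMeasure (volume.restrict Ω) :=
    isFiniteMeasure_restrict.mpr hΩbdd.measure_lt_top.ne
  obtain ⟨C, hC⟩ := isCompact_univ.exists_bound_of_continuousOn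
    (f := fun d : S2 => crossc (crossc (cm d.val) (cm p)) (cm d.val)) (by fun_prop)
  set A := σS.real Set.univ * (C * √((volume.restrict Ω).real Set.univ) * ‖T‖) ^ 2
  have hA : 0 ≤ A := by positivity
  refine ⟨c / (A + 1), √(σS.real Set.univ) + 1, by positivity, by positivity, fun y => ⟨?_, ?_⟩⟩
  · set h := toL2 (volume.restrict Ω) (herg k (phiy k p y))
    have hDSM : c * ‖h‖ ^ 2 ≤ IDSM k Ω T p y := by
      rw [IDSM_eq_norm_inner, norm_inner_symm]
      exact hcoer h (subset_closure ⟨_, memLp_phiy k p y, ae_of_all _ (dotc_cm_phiy k p y), rfl⟩)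
    have hOSM : IOSM k Ω T p y ≤ A * ‖h‖ ^ 2 :=
      (IOSM_le k Ω T p y fun d => hC d trivial).trans_eq (by ring)
    calc c / (A + 1) * IOSM k Ω T p y ≤ c / (A + 1) * (A * ‖h‖ ^ 2) := by gcongr
      _ ≤ c * ‖h‖ ^ 2 := by
          rw [← mul_assoc]
          gcongr
          rw [div_mul_eq_mul_div, div_le_iff₀ (by positivity)]
          linarith
      _ ≤ IDSM k Ω T p y := hDSM
  · exact (IDSM_le_sqrt_IOSM k Ω T p y).trans (by gcongr; linarith)

/-- **Theorem 4.5 (equivalence of OSM and DSM).** -/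
theorem stmt3 (k : ℝ) (hk : 0 < k) (p : R3) (hp : p ≠ 0) (Ω : Set R3)
    (hΩmeas : MeasurableSet Ω) (hΩbdd : Bornology.IsBounded Ω) (hΩpos : 0 < volume Ω)
    (T : Lp C3 2 (volume.restrict Ω) →L[ℂ] Lp C3 2 (volume.restrict Ω))
    (c : ℝ) (hc : 0 < c)
    (hcoer : ∀ h ∈ closure (ranHt k Ω), c * ‖h‖ ^ 2 ≤ ‖(inner ℂ (T h) h : ℂ)‖) :
    ∃ c₁ c₂ : ℝ, 0 < c₁ ∧ 0 < c₂ ∧ ∀ y : R3,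
      c₁ * IOSM k Ω T p y ≤ IDSM k Ω T p y ∧
      IDSM k Ω T p y ≤ c₂ * Real.sqrt (IOSM k Ω T p y) :=
  stmt3_general k p Ω hΩbdd T c hc hcoer
end
end

section
/- (Theorem 3.2(a), injectivity of the Herglotz operator) Let k > 0, let g ∈ L²(S²,ℂ³), and let U ⊂ ℝ³ be a nonempty open set. If ∫_{S²} g(d) e^{ik x·d} dσ(d) = 0 for every x ∈ U, then g = 0 σ-almost everywhere on S². -/
open MeasureTheory Metric Complex

noncomputable section

/-! Write `P y = ∫ e^{i y·d} g(d) dσ(d)` (`planeWaveIntegral σS g`), so that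
`herg k g x = P (k x)`. Since the sphere is bounded, `P` restricted to a real line
`y₀ + t (y - y₀)` is the trace of an entire function of `t`; vanishing on the open set forces
`P ≡ 0` by the identity theorem. Hence `g` annihilates every plane wave `d ↦ e^{i y·d}`. The plane
waves span a conjugation-closed, point-separating algebra, dense in `C(S², ℂ)` by
Stone–Weierstrass, so `∫ φ g dσ = 0` for every continuous `φ`; approximating indicators of closed
sets by continuous functions then gives `g = 0` a.e. -/

open Set Filter Topology Submodule

section PlaneWave

variable {E : Type*} [NormedAddCommGroup E] [InnerProductSpace ℝ E] (s : Set E)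

def planeWave (y : E) : C(s, ℂ) where
  toFun x := cexp (inner ℝ y (x : E) * I)
  continuous_toFun := by fun_prop

variable {s}

@[simp]
lemma planeWave_apply (y : E) (x : s) : planeWave s y x = cexp (inner ℝ y (x : E) * I) := rfl

lemma norm_planeWave (y : E) (x : s) : ‖planeWave s y x‖ = 1 :=
  norm_exp_ofReal_mul_I _

lemma planeWave_zero : planeWave s 0 = 1 := by
  ext x; simp

lemma planeWave_add (y z : E) : planeWave s (y + z) = planeWave s y * planeWave s z := by
  ext x; simp [inner_add_left, add_mul, Complex.exp_add]

lemma star_planeWave (y : E) : star (planeWave s y) = planeWave s (-y) := by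
  ext x; simp [← Complex.exp_conj]

lemma exists_planeWave_ne {x₁ x₂ : s} (h : x₁ ≠ x₂) :
    ∃ y, planeWave s y x₁ ≠ planeWave s y x₂ := by
  set w : E := (x₁ : E) - x₂
  have hw : inner ℝ w w ≠ 0 := inner_self_ne_zero.2 (sub_ne_zero.2 (Subtype.coe_injective.ne h))
  refine ⟨(Real.pi / inner ℝ w w) • w, fun heq => ?_⟩
  have hphase : planeWave s ((Real.pi / inner ℝ w w) • w) x₁ =
      -planeWave s ((Real.pi / inner ℝ w w) • w) x₂ := by
    have : inner ℝ ((Real.pi / inner ℝ w w) • w) (x₁ : E) =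
        inner ℝ ((Real.pi / inner ℝ w w) • w) (x₂ : E) + Real.pi := by
      rw [← sub_eq_iff_eq_add', ← inner_sub_right, real_inner_smul_left, div_mul_cancel₀ _ hw]
    simp only [planeWave_apply, this, ofReal_add, add_mul, Complex.exp_add, exp_pi_mul_I]
    ring
  rw [hphase, neg_eq_iff_add_eq_zero, ← two_mul, mul_eq_zero] at heq
  simp at heq

def planeWaveSubalgebra (s : Set E) : StarSubalgebra ℂ C(s, ℂ) where
  toSubalgebra := Algebra.adjoin ℂ (range (planeWave s))
  star_mem' := by
    change Algebra.adjoin ℂ (range (planeWave s)) ≤ star (Algebra.adjoin ℂ (range (planeWave s)))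
    refine Algebra.adjoin_le ?_
    rintro - ⟨y, rfl⟩
    exact Algebra.subset_adjoin ⟨-y, (star_planeWave y).symm⟩

lemma planeWaveSubalgebra_coe :
    Subalgebra.toSubmodule (planeWaveSubalgebra s).toSubalgebra = span ℂ (range (planeWave s)) := by
  apply Algebra.adjoin_eq_span_of_subset
  refine Subset.trans ?_ subset_span
  intro φ hφ
  refine Submonoid.closure_induction (fun _ => id) ⟨0, planeWave_zero⟩ ?_ hφ
  rintro - - - - ⟨y, rfl⟩ ⟨z, rfl⟩
  exact ⟨y + z, planeWave_add y z⟩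

lemma planeWaveSubalgebra_separatesPoints : (planeWaveSubalgebra s).SeparatesPoints := by
  intro x₁ x₂ h
  obtain ⟨y, hy⟩ := exists_planeWave_ne h
  exact ⟨_, ⟨planeWave s y, Algebra.subset_adjoin ⟨y, rfl⟩, rfl⟩, hy⟩

lemma dense_span_planeWave [CompactSpace s] :
    Dense (span ℂ (range (planeWave s)) : Set C(s, ℂ)) := by
  rw [dense_iff_topologicalClosure_eq_top, ← planeWaveSubalgebra_coe]
  exact congr_arg (Subalgebra.toSubmodule <| StarSubalgebra.toSubalgebra ·)
    (ContinuousMap.starSubalgebra_topologicalClosure_eq_top_of_separatesPoints _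
      planeWaveSubalgebra_separatesPoints)

end PlaneWave

open scoped BoundedContinuousFunction NNReal

section IntegralAgainstContinuous

variable {X : Type*} [TopologicalSpace X] [MeasurableSpace X] {μ : Measure X}
  {V : Type*} [NormedAddCommGroup V] [NormedSpace ℂ V] {g : X → V}

lemma MeasureTheory.Integrable.continuousMap_smul [CompactSpace X] [OpensMeasurableSpace X]
    (hg : Integrable g μ) (φ : C(X, ℂ)) : Integrable (fun x => φ x • g x) μ :=
  hg.bdd_smul ‖φ‖ φ.continuous.aestronglyMeasurable (ae_of_all _ φ.norm_coe_le_norm)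

def integralSMulCLM [CompactSpace X] [OpensMeasurableSpace X] (hg : Integrable g μ) :
    C(X, ℂ) →L[ℂ] V :=
  LinearMap.mkContinuous
    { toFun φ := ∫ x, φ x • g x ∂μ
      map_add' φ ψ := by
        simp only [ContinuousMap.add_apply, add_smul]
        exact integral_add (hg.continuousMap_smul φ) (hg.continuousMap_smul ψ)
      map_smul' c φ := by
        simp only [ContinuousMap.smul_apply, smul_eq_mul, mul_smul, RingHom.id_apply]
        exact integral_smul c _ }
    (∫ x, ‖g x‖ ∂μ) fun φ => by
      rw [mul_comm, ← integral_const_mul]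
      refine norm_integral_le_of_norm_le (hg.norm.const_mul _) (ae_of_all _ fun x => ?_)
      rw [norm_smul]
      exact mul_le_mul_of_nonneg_right (φ.norm_coe_le_norm x) (norm_nonneg _)

@[simp]
lemma integralSMulCLM_apply [CompactSpace X] [OpensMeasurableSpace X] (hg : Integrable g μ)
    (φ : C(X, ℂ)) : integralSMulCLM hg φ = ∫ x, φ x • g x ∂μ := rfl

end IntegralAgainstContinuous

theorem ae_eq_zero_of_forall_integral_boundedContinuous_smul_eq_zero {X : Type*}
    [TopologicalSpace X] [HasOuterApproxClosed X] [MeasurableSpace X] [BorelSpace X]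
    {μ : Measure X} {F : Type*} [NormedAddCommGroup F] [NormedSpace ℝ F] [CompleteSpace F]
    {f : X → F} (hf : Integrable f μ) (h : ∀ φ : X →ᵇ ℝ, ∫ x, φ x • f x ∂μ = 0) : f =ᵐ[μ] 0 := by
  refine ae_eq_zero_of_forall_setIntegral_isClosed_eq_zero hf fun s hs => ?_
  have hlim : Tendsto (fun n => ∫ x, (hs.apprSeq n x : ℝ) • f x ∂μ) atTop
      (𝓝 (∫ x in s, f x ∂μ)) := by
    rw [← integral_indicator hs.measurableSet]
    refine tendsto_integral_of_dominated_convergence (fun x => ‖f x‖)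
      (fun n => (hs.apprSeq n).continuous.measurable.coe_nnreal_real.aestronglyMeasurable.smul
        hf.aestronglyMeasurable) hf.norm (fun n => ae_of_all _ fun x => ?_)
      (ae_of_all _ fun x => ?_)
    · rw [norm_smul]
      exact mul_le_of_le_one_left (norm_nonneg _)
        (by simpa using HasOuterApproxClosed.apprSeq_apply_le_one hs n x)
    · have hx : s.indicator f x = NNReal.toReal (s.indicator (fun _ => 1) x) • f x := by
        by_cases hxs : x ∈ s <;> simp [hxs]
      rw [hx]
      exact ((NNReal.continuous_coe.tendsto _).comp
        (tendsto_pi_nhds.1 (HasOuterApproxClosed.tendsto_apprSeq hs) x)).smul_const (f x)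
  refine tendsto_nhds_unique hlim (tendsto_const_nhds.congr fun n => ?_)
  exact (h ((hs.apprSeq n).comp _ NNReal.isometry_coe.lipschitz)).symm

section Holomorphic

variable {X : Type*} [MeasurableSpace X] {μ : Measure X}
  {V : Type*} [NormedAddCommGroup V] [NormedSpace ℂ V]

theorem differentiable_integral_cexp_mul_smul {m : X → ℂ} {M : ℝ}
    (hm : AEStronglyMeasurable m μ) (hmM : ∀ x, ‖m x‖ ≤ M) {g : X → V} (hg : Integrable g μ) :
    Differentiable ℂ fun z => ∫ x, cexp (m x * z) • g x ∂μ := by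
  have hexp : ∀ x z, ‖cexp (m x * z)‖ ≤ Real.exp (M * ‖z‖) := fun x z =>
    (norm_exp_le_exp_norm _).trans <| Real.exp_le_exp.2 <| by
      rw [norm_mul]; exact mul_le_mul_of_nonneg_right (hmM x) (norm_nonneg z)
  have hmeas : ∀ z, AEStronglyMeasurable (fun x => cexp (m x * z)) μ := fun z =>
    continuous_exp.comp_aestronglyMeasurable (hm.mul_const z)
  intro z₀
  refine (hasDerivAt_integral_of_dominated_loc_of_deriv_le
    (F' := fun z x => (cexp (m x * z) * m x) • g x)
    (bound := fun x => Real.exp (M * (‖z₀‖ + 1)) * M * ‖g x‖) (ball_mem_nhds z₀ one_pos)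
    (Eventually.of_forall fun z => (hmeas z).smul hg.aestronglyMeasurable)
    (hg.bdd_smul _ (hmeas z₀) (ae_of_all _ fun x => hexp x z₀))
    (((hmeas z₀).mul hm).smul hg.aestronglyMeasurable)
    (ae_of_all _ fun x z hz => ?_) (hg.norm.const_mul _)
    (ae_of_all _ fun x z _ => ?_)).2.differentiableAt
  · have hz' : ‖z‖ ≤ ‖z₀‖ + 1 := by
      have := norm_le_norm_add_norm_sub' z z₀
      rw [mem_ball, dist_eq_norm] at hz
      linarith
    have hM : 0 ≤ M := (norm_nonneg _).trans (hmM x)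
    rw [norm_smul, norm_mul]
    gcongr
    · exact (hexp x z).trans (Real.exp_le_exp.2 (mul_le_mul_of_nonneg_left hz' hM))
    · exact hmM x
  · simpa using (((hasDerivAt_id z).const_mul (m x)).cexp).smul_const (g x)

end Holomorphic

section PlaneWaveIntegral

variable {E : Type*} [NormedAddCommGroup E] [InnerProductSpace ℝ E] [MeasurableSpace E]
  {s : Set E} {μ : Measure s} {V : Type*} [NormedAddCommGroup V] [NormedSpace ℂ V] {g : s → V}

def planeWaveIntegral (μ : Measure s) (g : s → V) (y : E) : V :=
  ∫ x, planeWave s y x • g x ∂μ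

theorem planeWaveIntegral_eq_zero_of_eq_zero_on_isOpen [BorelSpace E] [CompleteSpace V]
    (hs : Bornology.IsBounded s) (hg : Integrable g μ) {U : Set E} (hU : IsOpen U)
    (hUne : U.Nonempty)
    (hvanish : ∀ y ∈ U, planeWaveIntegral μ g y = 0) (y : E) : planeWaveIntegral μ g y = 0 := by
  obtain ⟨y₀, hy₀⟩ := hUne
  obtain ⟨R, hR⟩ := hs.exists_norm_le
  set v := y - y₀
  set F : ℂ → V := fun z =>
    ∫ x, cexp ((inner ℝ v (x : E) * I) * z) • (planeWave s y₀ x • g x) ∂μ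
  have hF : Differentiable ℂ F := by
    refine differentiable_integral_cexp_mul_smul (M := ‖v‖ * R)
      (Continuous.aestronglyMeasurable (by fun_prop)) (fun x => ?_)
      (hg.bdd_smul 1 (planeWave s y₀).continuous.aestronglyMeasurable
        (ae_of_all _ fun x => (norm_planeWave y₀ x).le))
    rw [norm_mul, norm_I, mul_one, norm_real, Real.norm_eq_abs]
    exact (abs_real_inner_le_norm v x).trans
      (mul_le_mul_of_nonneg_left (hR x x.2) (norm_nonneg v))
  have hF_line : ∀ t : ℝ, F t = planeWaveIntegral μ g (y₀ + t • v) := fun t => by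
    refine integral_congr_ae (ae_of_all _ fun x => ?_)
    simp only [smul_smul, planeWave_apply, ← Complex.exp_add, inner_add_left, real_inner_smul_left]
    congr 2
    push_cast
    ring
  have hF_near : ∀ᶠ t : ℝ in 𝓝 0, F t = 0 := by
    have : Tendsto (fun t : ℝ => y₀ + t • v) (𝓝 0) (𝓝 y₀) := by
      simpa using (tendsto_const_nhds.add (tendsto_id.smul_const v) : Tendsto _ (𝓝 (0 : ℝ)) _)
    filter_upwards [this (hU.mem_nhds hy₀)] with t ht
    rw [hF_line]
    exact hvanish _ ht
  have hF_freq : ∃ᶠ z in 𝓝[≠] (0 : ℂ), F z = 0 := by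
    have hreal : Tendsto ((↑) : ℝ → ℂ) (𝓝[≠] 0) (𝓝[≠] 0) := by
      simpa using continuous_ofReal.continuousWithinAt.tendsto_nhdsWithin
        (x := (0 : ℝ)) (t := {0}ᶜ) fun t ht => by simpa using ht
    exact hreal.frequently (hF_near.filter_mono nhdsWithin_le_nhds).frequently
  have hF_analytic : AnalyticOnNhd ℂ F univ := fun z _ => hF.analyticAt z
  have hF_zero := hF_analytic.eqOn_zero_of_preconnected_of_frequently_eq_zero
    isPreconnected_univ (mem_univ 0) hF_freq (mem_univ 1)
  have h1 : F ((1 : ℝ) : ℂ) = 0 := by simpa using hF_zero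
  rwa [hF_line, one_smul, add_sub_cancel] at h1

end PlaneWaveIntegral

theorem ae_eq_zero_of_planeWaveIntegral_eq_zero_on_isOpen {E : Type*} [NormedAddCommGroup E]
    [InnerProductSpace ℝ E] [MeasurableSpace E] [BorelSpace E] {s : Set E} [CompactSpace s]
    {μ : Measure s} {V : Type*} [NormedAddCommGroup V] [NormedSpace ℂ V] [CompleteSpace V]
    {g : s → V} (hg : Integrable g μ) {U : Set E} (hU : IsOpen U) (hUne : U.Nonempty)
    (hvanish : ∀ y ∈ U, planeWaveIntegral μ g y = 0) : g =ᵐ[μ] 0 := by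
  have hs : Bornology.IsBounded s := (isCompact_iff_compactSpace.2 ‹_›).isBounded
  have hL : integralSMulCLM hg = 0 := by
    refine ContinuousLinearMap.ext_on dense_span_planeWave ?_
    rintro _ ⟨y, rfl⟩
    exact planeWaveIntegral_eq_zero_of_eq_zero_on_isOpen hs hg hU hUne hvanish y
  refine ae_eq_zero_of_forall_integral_boundedContinuous_smul_eq_zero hg fun φ => ?_
  have h := congr($hL (ContinuousMap.mk (fun x => (φ x : ℂ)) (by fun_prop)))
  simpa only [integralSMulCLM_apply, ContinuousMap.coe_mk, Complex.coe_smul, zero_apply] using h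

instance inst_s8 : IsFiniteMeasure σS := by
  unfold σS; infer_instance

lemma dotR_eq_inner (a b : R3) : dotR a b = inner ℝ a b := by
  simp [dotR, PiLp.inner_apply, mul_comm]

lemma herg_eq_planeWaveIntegral (k : ℝ) (g : S2 → C3) (x : R3) :
    herg k g x = planeWaveIntegral σS g (k • x) := by
  refine integral_congr_ae (ae_of_all _ fun d => ?_)
  dsimp only
  rw [planeWave_apply, real_inner_smul_left, dotR_eq_inner]
  push_cast
  ring_nf

/-- **Theorem 3.2(a), injectivity of the Herglotz operator.** -/
theorem stmt8 (k : ℝ) (hk : 0 < k) (g : S2 → C3) (hg : MemLp g 2 σS)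
    (U : Set R3) (hU : IsOpen U) (hUne : U.Nonempty)
    (hvanish : ∀ x ∈ U, herg k g x = 0) :
    g =ᵐ[σS] 0 := by
  refine ae_eq_zero_of_planeWaveIntegral_eq_zero_on_isOpen (hg.integrable one_le_two)
    (hU.smul₀ hk.ne') hUne.smul_set ?_
  rintro _ ⟨x, hx, rfl⟩
  rw [← herg_eq_planeWaveIntegral]
  exact hvanish x hx
end
end
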